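/- Let G be a domain in ℝ^n and let F ⊆ G be measurable with B(F) > 1, i.e. there exists h ∈ L^1_h(G) with |∫_F h dx| > ∫_{G∖F} |h| dx. If ω ∈ L^1(G) is strictly positive almost everywhere on F, then ω is not badly approximable with respect to L^1_h(G); that is, there exists u ∈ L^1_h(G) with ∫_G |ω − u| dx < ∫_G |ω| dx. -/
import Mathlib
open MeasureTheory Metric Filter
open scoped ENNReal

noncomputable def lap {n : ℕ} (f : EuclideanSpace ℝ (Fin n) → ℝ)
    (x : EuclideanSpace ℝ (Fin n)) : ℝ :=
  ∑ j : Fin n, fderiv ℝ (fun y => fderiv ℝ f y (EuclideanSpace.single j 1)) x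
    (EuclideanSpace.single j 1)

def HarmonicOn {n : ℕ} (f : EuclideanSpace ℝ (Fin n) → ℝ)
    (U : Set (EuclideanSpace ℝ (Fin n))) : Prop :=
  ContDiffOn ℝ 2 f U ∧ ∀ x ∈ U, lap f x = 0

lemma harmonicOn_const_mul {n : ℕ} {f : EuclideanSpace ℝ (Fin n) → ℝ}
    {G : Set (EuclideanSpace ℝ (Fin n))} (hGo : IsOpen G) (hf : HarmonicOn f G) (c : ℝ) :
    HarmonicOn (fun x => c * f x) G := by
  refine ⟨ContDiffOn.mul contDiffOn_const hf.1, fun x hx => ?_⟩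
  have hx' : G ∈ nhds x := hGo.mem_nhds hx
  have hev : ∀ᶠ y in nhds x, fderiv ℝ (fun z => c * f z) y = c • fderiv ℝ f y := by
    filter_upwards [hx'] with y hy
    have hd : DifferentiableAt ℝ f y :=
      (hf.1.contDiffAt (hGo.mem_nhds hy)).differentiableAt (by norm_num)
    exact fderiv_const_mul hd c
  have hct : ContDiffAt ℝ 2 f x := hf.1.contDiffAt hx'
  have hdF : DifferentiableAt ℝ (fderiv ℝ f) x :=
    (hct.fderiv_right (m := 1) (by norm_num)).differentiableAt (by norm_num)
  have key : ∀ j : Fin n,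
      fderiv ℝ (fun y => fderiv ℝ (fun z => c * f z) y (EuclideanSpace.single j 1)) x
        (EuclideanSpace.single j 1)
      = c * fderiv ℝ (fun y => fderiv ℝ f y (EuclideanSpace.single j 1)) x
        (EuclideanSpace.single j 1) := by
    intro j
    have h1 : (fun y => fderiv ℝ (fun z => c * f z) y (EuclideanSpace.single j 1))
        =ᶠ[nhds x] (fun y => c * fderiv ℝ f y (EuclideanSpace.single j 1)) := by
      filter_upwards [hev] with y hy
      rw [hy]; rfl
    rw [h1.fderiv_eq]
    have hg : DifferentiableAt ℝ (fun y => fderiv ℝ f y (EuclideanSpace.single j 1)) x :=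
      hdF.clm_apply (differentiableAt_const _)
    rw [fderiv_const_mul hg c]
    rfl
  have h0 := hf.2 x hx
  unfold lap at h0 ⊢
  simp only [key]
  rw [← Finset.mul_sum, h0, mul_zero]

/-- Theorem 5.4: if `F ⊆ G` has `B(F) > 1` (witnessed by some integrable harmonic `h`
with `|∫_F h| > ∫_{G∖F} |h|`) and `ω ∈ L¹(G)` is strictly positive a.e. on `F`, then
`ω` is not badly approximable with respect to `L¹_h(G)`. -/
theorem stmt_12 (n : ℕ) (hn : 2 ≤ n) (G : Set (EuclideanSpace ℝ (Fin n)))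
    (hGo : IsOpen G) (hGc : IsConnected G)
    (F : Set (EuclideanSpace ℝ (Fin n))) (hFG : F ⊆ G) (hFm : MeasurableSet F)
    (hB : ∃ h : EuclideanSpace ℝ (Fin n) → ℝ, HarmonicOn h G ∧ IntegrableOn h G ∧
      (∫ x in G \ F, |h x|) < |∫ x in F, h x|)
    (ω : EuclideanSpace ℝ (Fin n) → ℝ) (hωi : IntegrableOn ω G)
    (hωpos : ∀ᵐ x ∂(volume.restrict F), 0 < ω x) :
    ∃ u : EuclideanSpace ℝ (Fin n) → ℝ, HarmonicOn u G ∧ IntegrableOn u G ∧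
      (∫ x in G, |ω x - u x|) < ∫ x in G, |ω x| := by
  obtain ⟨h, hharm, hint, hlt⟩ := hB
  have hGFm : MeasurableSet (G \ F) := hGo.measurableSet.diff hFm
  -- flip the sign of h so that its integral over F is nonnegative
  set s : ℝ := if 0 ≤ ∫ x in F, h x then 1 else -1 with hs
  set h' : EuclideanSpace ℝ (Fin n) → ℝ := fun x => s * h x with hh'
  have hh'harm : HarmonicOn h' G := harmonicOn_const_mul hGo hharm s
  have hh'int : IntegrableOn h' G := hint.const_mul s
  have hs1 : |s| = 1 := by
    rw [hs]; split <;> norm_num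
  have habs : ∀ x, |h' x| = |h x| := by
    intro x
    rw [hh']
    simp [abs_mul, hs1]
  set I : ℝ := ∫ x in F, h' x with hIdef
  set J : ℝ := ∫ x in G \ F, |h' x| with hJdef
  have hI : I = |∫ x in F, h x| := by
    rw [hIdef, hh', integral_const_mul]
    rcases le_or_gt 0 (∫ x in F, h x) with hc | hc
    · simp [hs, hc, abs_of_nonneg hc]
    · simp [hs, hc.not_ge, abs_of_neg hc]
  have hJ : J = ∫ x in G \ F, |h x| := by
    rw [hJdef]; exact integral_congr_ae (Filter.Eventually.of_forall fun x => habs x)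
  have hJI : J < I := by rw [hI, hJ]; exact hlt
  -- integrability on the pieces
  have hωF : IntegrableOn ω F := hωi.mono_set hFG
  have hωGF : IntegrableOn ω (G \ F) := hωi.mono_set Set.diff_subset
  have hhF : IntegrableOn h' F := hh'int.mono_set hFG
  have hhGF : IntegrableOn h' (G \ F) := hh'int.mono_set Set.diff_subset
  -- dominated convergence
  set Fk : ℕ → EuclideanSpace ℝ (Fin n) → ℝ :=
    fun k x => max (h' x - ((k : ℝ) + 1) * ω x) 0 with hFk
  have FkInt : ∀ k, Integrable (Fk k) (volume.restrict F) :=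
    fun k => (hhF.sub (hωF.const_mul _)).pos_part
  have htend : Tendsto (fun k => ∫ x in F, Fk k x) atTop (nhds 0) := by
    have h0 : (0 : ℝ) = ∫ x in F, (0 : ℝ) := by simp
    rw [h0]
    refine tendsto_integral_of_dominated_convergence (fun x => |h' x|)
      (fun k => (FkInt k).aestronglyMeasurable) hhF.abs ?_ ?_
    · intro k
      filter_upwards [hωpos] with x hx
      rw [Real.norm_eq_abs, abs_of_nonneg (le_max_right _ _)]
      have hk1 : (0 : ℝ) < ((k : ℝ) + 1) * ω x := by positivity
      exact max_le (by nlinarith [le_abs_self (h' x)]) (abs_nonneg _)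
    · filter_upwards [hωpos] with x hx
      have hev : ∀ᶠ k in atTop, Fk k x = 0 := by
        obtain ⟨N, hN⟩ := exists_nat_gt (h' x / ω x)
        filter_upwards [Filter.eventually_ge_atTop N] with k hk
        have hNk : (N : ℝ) ≤ (k : ℝ) := by exact_mod_cast hk
        have : h' x < (N : ℝ) * ω x := (div_lt_iff₀ hx).mp hN
        refine max_eq_right ?_
        nlinarith
      have hev' : (fun k => Fk k x) =ᶠ[atTop] (fun _ => (0 : ℝ)) := hev
      exact Tendsto.congr' hev'.symm tendsto_const_nhds
  have hδ2 : (0 : ℝ) < (I - J) / 2 := by linarith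
  obtain ⟨k, hk⟩ := (htend.eventually (Iio_mem_nhds hδ2)).exists
  set t : ℝ := 1 / ((k : ℝ) + 1) with htdef
  have ht : 0 < t := by positivity
  set u : EuclideanSpace ℝ (Fin n) → ℝ := fun x => t * h' x with hu
  have huharm : HarmonicOn u G := harmonicOn_const_mul hGo hh'harm t
  have huint : IntegrableOn u G := hh'int.const_mul t
  have huF : IntegrableOn u F := huint.mono_set hFG
  have huGF : IntegrableOn u (G \ F) := huint.mono_set Set.diff_subset
  refine ⟨u, huharm, huint, ?_⟩
  have htk : t * ((k : ℝ) + 1) = 1 := by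
    rw [htdef]; field_simp
  -- pointwise identity on F
  have hpt : ∀ x, |ω x - u x| = (ω x - u x) + 2 * (t * Fk k x) := by
    intro x
    have h1 : t * Fk k x = max (u x - ω x) 0 := by
      rw [hFk, hu]
      rw [mul_max_of_nonneg _ _ ht.le, mul_zero]
      congr 1
      have : t * (((k : ℝ) + 1) * ω x) = ω x := by rw [← mul_assoc, htk, one_mul]
      rw [mul_sub, this]
    rw [h1]
    rcases le_total (u x) (ω x) with hle | hle
    · rw [max_eq_right (by linarith), abs_of_nonneg (by linarith)]; ring
    · rw [max_eq_left (by linarith), abs_of_nonpos (by linarith)]; ring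
  -- integral over F
  have hIu : ∫ x in F, u x = t * I := by
    rw [hIdef, hu, integral_const_mul]
  have eF : ∫ x in F, |ω x - u x|
      = ((∫ x in F, ω x) - t * I) + 2 * (t * ∫ x in F, Fk k x) := by
    calc ∫ x in F, |ω x - u x|
        = ∫ x in F, ((ω x - u x) + 2 * (t * Fk k x)) := by
          exact integral_congr_ae (Filter.Eventually.of_forall fun x => hpt x)
      _ = (∫ x in F, (ω x - u x)) + ∫ x in F, 2 * (t * Fk k x) :=
          integral_add (hωF.sub huF) (((FkInt k).const_mul t).const_mul 2)
      _ = ((∫ x in F, ω x) - t * I) + 2 * (t * ∫ x in F, Fk k x) := by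
          rw [integral_sub hωF huF, hIu, integral_const_mul, integral_const_mul]
  -- integral over G \ F
  have eGF : ∫ x in G \ F, |ω x - u x| ≤ (∫ x in G \ F, |ω x|) + t * J := by
    have step : ∫ x in G \ F, |ω x - u x| ≤ ∫ x in G \ F, (|ω x| + |u x|) :=
      integral_mono ((hωGF.sub huGF).abs) (hωGF.abs.add huGF.abs)
        (fun x => abs_sub _ _)
    have : ∫ x in G \ F, (|ω x| + |u x|) = (∫ x in G \ F, |ω x|) + t * J := by
      rw [integral_add hωGF.abs huGF.abs, hJdef]
      congr 1
      rw [← integral_const_mul]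
      refine integral_congr_ae (Filter.Eventually.of_forall fun x => ?_)
      simp only [hu, abs_mul, abs_of_pos ht]
    linarith
  -- splitting of G
  have hsplit : ∀ g : EuclideanSpace ℝ (Fin n) → ℝ, IntegrableOn g G →
      ∫ x in G, g x = (∫ x in F, g x) + ∫ x in G \ F, g x := by
    intro g hg
    have key := setIntegral_union (Set.disjoint_sdiff_right) hGFm
      (hg.mono_set hFG) (hg.mono_set Set.diff_subset)
    rw [Set.union_diff_cancel hFG] at key
    exact key
  have hsplit1 := hsplit (fun x => |ω x - u x|) (hωi.sub huint).abs
  have hsplit2 := hsplit (fun x => |ω x|) hωi.abs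
  have hωF_le : ∫ x in F, ω x ≤ ∫ x in F, |ω x| :=
    integral_mono hωF hωF.abs (fun x => le_abs_self _)
  have hmul := mul_lt_mul_of_pos_left hk ht
  rw [hsplit1, hsplit2]
  linarith
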